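/- arXiv:1104.3455 — 3 statements merged into one kernel-verified Lean document; each statement's English description precedes it below -/
import Mathlib

section
/- Let 𝓗 be a complex Hilbert space, (e_n)_{n∈ℕ} an orthonormal sequence in 𝓗, and A : 𝓗 → 𝓗 a bounded linear bijection with bounded inverse. Set h_n = A e_n. Let V : ℕ → ℝ be non-increasing with V_n ≥ 0 for all n. For n ∈ ℕ define λ_n = sup over all (n+1)-dimensional subspaces L ⊆ 𝓗 of inf_{f∈L, ‖f‖=1} Σ_{k∈ℕ} V_k·|⟨f, h_k⟩|². Then for every n ∈ ℕ: ‖A⁻¹‖⁻² · V_n ≤ λ_n ≤ ‖A‖² · V_n. -/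
/-!
Write `q f = ∑ₖ V k ‖⟪f, A (e k)⟫‖² = ∑ₖ V k ‖⟪e k, A† f⟫‖²`.

Upper bound: every `(n+1)`-dimensional `L` contains a unit vector `f` orthogonal to
`A (e 0), …, A (e (n-1))`. Only the terms with `k ≥ n` survive, where `V k ≤ V n`, and Bessel's
inequality for `A† f` bounds what is left by `V n ‖A‖²`.

Lower bound: take `L = A (span {e 0, …, e n})`. A unit vector `f = A g` of `L` satisfies
`1 = ⟪A† f, g⟫ ≤ (∑_{k ≤ n} ‖⟪f, A (e k)⟫‖²)^{1/2} ‖g‖` (project `A† f` onto the span) and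
`‖g‖ ≤ ‖A⁻¹‖`, so already `∑_{k ≤ n} V k ‖⟪f, A (e k)⟫‖² ≥ V n ‖A⁻¹‖⁻²`.
-/

open scoped InnerProductSpace
open ContinuousLinearMap Module Submodule

section MinMax

variable {𝕜 E : Type*} [RCLike 𝕜] [NormedAddCommGroup E] [InnerProductSpace 𝕜 E]

theorem Submodule.exists_norm_eq_one_forall_inner_eq_zero {L : Submodule 𝕜 E} {n : ℕ}
    (hL : n < finrank 𝕜 L) (v : Fin n → E) :
    ∃ f ∈ L, ‖f‖ = 1 ∧ ∀ k, ⟪f, v k⟫_𝕜 = 0 := by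
  have : FiniteDimensional 𝕜 L := Module.finite_of_finrank_pos (by omega)
  let φ : L →ₗ[𝕜] Fin n → 𝕜 := LinearMap.pi fun k => (innerSL 𝕜 (v k)).toLinearMap ∘ₗ L.subtype
  obtain ⟨x, hx, hx0⟩ := (Submodule.ne_bot_iff _).mp
    (LinearMap.ker_ne_bot_of_finrank_lt (f := φ) (by simpa using hL))
  have hx0 : (x : E) ≠ 0 := by simpa using hx0
  refine ⟨(‖(x : E)‖⁻¹ : 𝕜) • (x : E), L.smul_mem _ x.2, norm_smul_inv_norm hx0, fun k => ?_⟩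
  have hxk : ⟪v k, (x : E)⟫_𝕜 = 0 := congrFun hx k
  rw [inner_smul_left, inner_eq_zero_symm.mp hxk, mul_zero]

variable (𝕜) in
noncomputable def courantFischer (q : E → ℝ) (n : ℕ) : ℝ :=
  ⨆ L : {L : Submodule 𝕜 E // finrank 𝕜 L = n + 1},
    ⨅ f : {f : E // f ∈ (L : Submodule 𝕜 E) ∧ ‖f‖ = 1}, q f

theorem courantFischer_le {q : E → ℝ} {n : ℕ} {c : ℝ} (hq : ∀ f, 0 ≤ q f)
    (hne : ∃ L : Submodule 𝕜 E, finrank 𝕜 L = n + 1)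
    (hc : ∀ L : Submodule 𝕜 E, finrank 𝕜 L = n + 1 → ∃ f ∈ L, ‖f‖ = 1 ∧ q f ≤ c) :
    courantFischer 𝕜 q n ≤ c := by
  have : Nonempty {L : Submodule 𝕜 E // finrank 𝕜 L = n + 1} := let ⟨L, hL⟩ := hne; ⟨⟨L, hL⟩⟩
  refine ciSup_le fun ⟨L, hL⟩ => ?_
  obtain ⟨f, hfL, hf1, hfc⟩ := hc L hL
  exact (ciInf_le ⟨0, by rintro _ ⟨g, rfl⟩; exact hq g⟩ ⟨f, hfL, hf1⟩).trans hfc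

theorem le_courantFischer {q : E → ℝ} {n : ℕ} {c C : ℝ} (hq : ∀ f, 0 ≤ q f)
    (hC : ∀ f, ‖f‖ = 1 → q f ≤ C) {L : Submodule 𝕜 E} (hL : finrank 𝕜 L = n + 1)
    (hc : ∀ f ∈ L, ‖f‖ = 1 → c ≤ q f) :
    c ≤ courantFischer 𝕜 q n := by
  have hunit : ∀ L : Submodule 𝕜 E, finrank 𝕜 L = n + 1 → ∃ f ∈ L, ‖f‖ = 1 := fun L hL => by
    obtain ⟨f, hfL, hf1, -⟩ := L.exists_norm_eq_one_forall_inner_eq_zero (n := 0) (by omega)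
      Fin.elim0
    exact ⟨f, hfL, hf1⟩
  have hbdd : BddAbove (Set.range fun L : {L : Submodule 𝕜 E // finrank 𝕜 L = n + 1} =>
      ⨅ f : {f : E // f ∈ (L : Submodule 𝕜 E) ∧ ‖f‖ = 1}, q f) := by
    refine ⟨C, ?_⟩
    rintro _ ⟨⟨L, hL⟩, rfl⟩
    obtain ⟨f, hfL, hf1⟩ := hunit L hL
    exact (ciInf_le ⟨0, by rintro _ ⟨g, rfl⟩; exact hq g⟩ ⟨f, hfL, hf1⟩).trans (hC f hf1)
  have : Nonempty {f : E // f ∈ L ∧ ‖f‖ = 1} := let ⟨f, hfL, hf1⟩ := hunit L hL; ⟨⟨f, hfL, hf1⟩⟩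
  exact le_ciSup_of_le hbdd ⟨L, hL⟩ (le_ciInf fun f => hc f f.2.1 f.2.2)

end MinMax

section Frame

variable {𝕜 E F : Type*} [RCLike 𝕜] [NormedAddCommGroup E] [InnerProductSpace 𝕜 E]
  [NormedAddCommGroup F] [InnerProductSpace 𝕜 F]

theorem OrthonormalBasis.norm_inner_sq_le {ι : Type*} [Fintype ι] {K : Submodule 𝕜 E}
    [K.HasOrthogonalProjection] (b : OrthonormalBasis ι 𝕜 K) (x : E) (u : K) :
    ‖⟪x, (u : E)⟫_𝕜‖ ^ 2 ≤ (∑ i, ‖⟪(b i : E), x⟫_𝕜‖ ^ 2) * ‖u‖ ^ 2 := by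
  have hproj : ∑ i, ‖⟪(b i : E), x⟫_𝕜‖ ^ 2 = ‖K.orthogonalProjectionOnto x‖ ^ 2 := by
    simp_rw [← b.sum_sq_norm_inner_right, inner_orthogonalProjectionOnto_eq_of_mem_left]
  rw [hproj, ← mul_pow, ← inner_orthogonalProjectionOnto_eq_of_mem_right]
  gcongr
  exact norm_inner_le_norm _ _

variable [CompleteSpace E] [CompleteSpace F]

theorem ContinuousLinearMap.norm_inner_apply_eq_norm_inner_adjoint (A : E →L[𝕜] F) (x : E)
    (f : F) : ‖⟪f, A x⟫_𝕜‖ = ‖⟪x, adjoint A f⟫_𝕜‖ := by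
  rw [norm_inner_symm, adjoint_inner_right]

theorem OrthonormalBasis.norm_sq_le_of_mem_map {ι : Type*} [Fintype ι] {K : Submodule 𝕜 E}
    [K.HasOrthogonalProjection] (b : OrthonormalBasis ι 𝕜 K) (A : E ≃L[𝕜] F) {f : F}
    (hf : f ∈ K.map (A.toLinearEquiv : E →ₗ[𝕜] F)) :
    ‖f‖ ^ 2 ≤ ‖(A.symm : F →L[𝕜] E)‖ ^ 2 * ∑ i, ‖⟪f, A (b i)⟫_𝕜‖ ^ 2 := by
  obtain ⟨g, hgK, rfl⟩ := hf
  change ‖A g‖ ^ 2 ≤ _ * ∑ i, ‖⟪A g, A (b i)⟫_𝕜‖ ^ 2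
  set S := ∑ i, ‖⟪A g, A (b i)⟫_𝕜‖ ^ 2
  have hAg : ‖⟪adjoint (A : E →L[𝕜] F) (A g), g⟫_𝕜‖ = ‖A g‖ ^ 2 := by
    rw [adjoint_inner_left, ContinuousLinearEquiv.coe_coe, inner_self_eq_norm_sq_to_K, norm_pow,
      RCLike.norm_ofReal, abs_norm]
  have hbessel := b.norm_inner_sq_le (adjoint (A : E →L[𝕜] F) (A g)) ⟨g, hgK⟩
  simp only [← (A : E →L[𝕜] F).norm_inner_apply_eq_norm_inner_adjoint, hAg] at hbessel
  have hg : ‖g‖ ≤ ‖(A.symm : F →L[𝕜] E)‖ * ‖A g‖ := by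
    simpa using (A.symm : F →L[𝕜] E).le_opNorm (A g)
  rcases (norm_nonneg (A g)).eq_or_lt with h0 | hpos
  · rw [← h0, zero_pow two_ne_zero]; positivity
  · have : ‖A g‖ ^ 2 * ‖A g‖ ^ 2 ≤ (‖(A.symm : F →L[𝕜] E)‖ ^ 2 * S) * ‖A g‖ ^ 2 := by
      calc ‖A g‖ ^ 2 * ‖A g‖ ^ 2 = (‖A g‖ ^ 2) ^ 2 := by ring
        _ ≤ S * ‖g‖ ^ 2 := hbessel
        _ ≤ S * (‖(A.symm : F →L[𝕜] E)‖ * ‖A g‖) ^ 2 := by gcongr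
        _ = _ := by ring
    exact le_of_mul_le_mul_right this (by positivity)

variable {ι : Type*} {e : ι → E}

theorem Orthonormal.summable_norm_inner_map_sq (he : Orthonormal 𝕜 e) (A : E →L[𝕜] F) (f : F) :
    Summable fun i => ‖⟪f, A (e i)⟫_𝕜‖ ^ 2 := by
  simpa only [A.norm_inner_apply_eq_norm_inner_adjoint] using he.inner_products_summable _

theorem Orthonormal.tsum_norm_inner_map_sq_le (he : Orthonormal 𝕜 e) (A : E →L[𝕜] F) (f : F) :
    ∑' i, ‖⟪f, A (e i)⟫_𝕜‖ ^ 2 ≤ ‖A‖ ^ 2 * ‖f‖ ^ 2 := by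
  simp_rw [A.norm_inner_apply_eq_norm_inner_adjoint]
  calc ∑' i, ‖⟪e i, adjoint A f⟫_𝕜‖ ^ 2 ≤ ‖adjoint A f‖ ^ 2 := he.tsum_inner_products_le _
    _ ≤ (‖adjoint A‖ * ‖f‖) ^ 2 := by gcongr; exact le_opNorm _ _
    _ = ‖A‖ ^ 2 * ‖f‖ ^ 2 := by rw [LinearIsometryEquiv.norm_map, mul_pow]

end Frame

section Weighted

variable {𝕜 E F : Type*} [RCLike 𝕜] [NormedAddCommGroup E] [InnerProductSpace 𝕜 E]
  [NormedAddCommGroup F] [InnerProductSpace 𝕜 F] [CompleteSpace E] [CompleteSpace F]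
  {e : ℕ → E} {V : ℕ → ℝ}

theorem Orthonormal.summable_mul_norm_inner_map_sq (he : Orthonormal 𝕜 e) (hV0 : ∀ k, 0 ≤ V k)
    (hV : Antitone V) (A : E →L[𝕜] F) (f : F) :
    Summable fun k => V k * ‖⟪f, A (e k)⟫_𝕜‖ ^ 2 :=
  ((he.summable_norm_inner_map_sq A f).mul_left (V 0)).of_nonneg_of_le
    (fun k => mul_nonneg (hV0 k) (sq_nonneg _))
    (fun k => mul_le_mul_of_nonneg_right (hV (Nat.zero_le k)) (sq_nonneg _))

theorem Orthonormal.tsum_mul_norm_inner_map_sq_le (he : Orthonormal 𝕜 e) (hV0 : ∀ k, 0 ≤ V k)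
    (hV : Antitone V) (A : E →L[𝕜] F) {f : F} {n : ℕ} (hf : ∀ k < n, ⟪f, A (e k)⟫_𝕜 = 0) :
    ∑' k, V k * ‖⟪f, A (e k)⟫_𝕜‖ ^ 2 ≤ ‖A‖ ^ 2 * V n * ‖f‖ ^ 2 := by
  have hsummable := he.summable_norm_inner_map_sq A f
  calc ∑' k, V k * ‖⟪f, A (e k)⟫_𝕜‖ ^ 2 ≤ ∑' k, V n * ‖⟪f, A (e k)⟫_𝕜‖ ^ 2 := by
        refine (he.summable_mul_norm_inner_map_sq hV0 hV A f).tsum_le_tsum (fun k => ?_)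
          (hsummable.mul_left (V n))
        rcases lt_or_ge k n with hk | hk
        · simp [hf k hk]
        · exact mul_le_mul_of_nonneg_right (hV hk) (sq_nonneg _)
    _ = V n * ∑' k, ‖⟪f, A (e k)⟫_𝕜‖ ^ 2 := tsum_mul_left
    _ ≤ V n * (‖A‖ ^ 2 * ‖f‖ ^ 2) := by gcongr; exacts [hV0 n, he.tsum_norm_inner_map_sq_le A f]
    _ = ‖A‖ ^ 2 * V n * ‖f‖ ^ 2 := by ring

theorem Orthonormal.le_tsum_mul_norm_inner_map_sq [DecidableEq E] (he : Orthonormal 𝕜 e)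
    (hV0 : ∀ k, 0 ≤ V k) (hV : Antitone V) (A : E ≃L[𝕜] F) {f : F} {n : ℕ}
    (hf : f ∈ (span 𝕜 ((Finset.range (n + 1)).image e : Set E)).map
      (A.toLinearEquiv : E →ₗ[𝕜] F)) :
    ‖(A.symm : F →L[𝕜] E)‖⁻¹ ^ 2 * V n * ‖f‖ ^ 2 ≤ ∑' k, V k * ‖⟪f, A (e k)⟫_𝕜‖ ^ 2 := by
  have hS := (OrthonormalBasis.span he (Finset.range (n + 1))).norm_sq_le_of_mem_map A hf
  simp only [OrthonormalBasis.span_apply] at hS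
  rw [Finset.sum_coe_sort (Finset.range (n + 1)) fun k => ‖⟪f, A (e k)⟫_𝕜‖ ^ 2] at hS
  calc ‖(A.symm : F →L[𝕜] E)‖⁻¹ ^ 2 * V n * ‖f‖ ^ 2
      = V n * ((‖(A.symm : F →L[𝕜] E)‖ ^ 2)⁻¹ * ‖f‖ ^ 2) := by ring
    _ ≤ V n * ∑ k ∈ Finset.range (n + 1), ‖⟪f, A (e k)⟫_𝕜‖ ^ 2 := by
        gcongr
        · exact hV0 n
        · exact inv_mul_le_of_le_mul₀ (by positivity) (by positivity) hS
    _ ≤ ∑ k ∈ Finset.range (n + 1), V k * ‖⟪f, A (e k)⟫_𝕜‖ ^ 2 := by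
        rw [Finset.mul_sum]
        gcongr with k hk
        exact hV (Nat.lt_succ_iff.mp (Finset.mem_range.mp hk))
    _ ≤ ∑' k, V k * ‖⟪f, A (e k)⟫_𝕜‖ ^ 2 :=
        (he.summable_mul_norm_inner_map_sq hV0 hV (A : E →L[𝕜] F) f).sum_le_tsum _
          fun k _ => mul_nonneg (hV0 k) (sq_nonneg _)

end Weighted

/-- Abstract Hilbert-space form of the eigenvalue part of Theorem 2.1:
for `h n = A (e n)` with `(e n)` orthonormal and `A` a bounded bijection with
bounded inverse, and `V` non-increasing and non-negative, the Courant–Fischer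
numbers `λ n` of the quadratic form `f ↦ Σ_k V k * |⟨f, h k⟩|²` satisfy
`‖A⁻¹‖⁻² V n ≤ λ n ≤ ‖A‖² V n`. -/
theorem stmt1
    (𝓗 : Type*) [NormedAddCommGroup 𝓗] [InnerProductSpace ℂ 𝓗] [CompleteSpace 𝓗]
    (e : ℕ → 𝓗) (he : Orthonormal ℂ e)
    (A : 𝓗 ≃L[ℂ] 𝓗)
    (h : ℕ → 𝓗) (hh : ∀ n, h n = A (e n))
    (V : ℕ → ℝ) (hV0 : ∀ n, 0 ≤ V n) (hVmono : Antitone V)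
    (lam : ℕ → ℝ)
    (hlam : ∀ n, lam n =
      ⨆ L : {L : Submodule ℂ 𝓗 // Module.finrank ℂ L = n + 1},
        ⨅ f : {f : 𝓗 // f ∈ (L : Submodule ℂ 𝓗) ∧ ‖f‖ = 1},
          ∑' k, V k * ‖(⟪(f : 𝓗), h k⟫_ℂ : ℂ)‖ ^ 2) :
    ∀ n, ‖(A.symm : 𝓗 →L[ℂ] 𝓗)‖⁻¹ ^ 2 * V n ≤ lam n ∧
      lam n ≤ ‖(A : 𝓗 →L[ℂ] 𝓗)‖ ^ 2 * V n := by
  classical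
  obtain rfl : h = fun k => A (e k) := funext hh
  intro n
  set q : 𝓗 → ℝ := fun f => ∑' k, V k * ‖⟪f, A (e k)⟫_ℂ‖ ^ 2
  have hq0 : ∀ f, 0 ≤ q f := fun f => tsum_nonneg fun k => mul_nonneg (hV0 k) (sq_nonneg _)
  have hqC (f : 𝓗) (hf : ‖f‖ = 1) : q f ≤ ‖(A : 𝓗 →L[ℂ] 𝓗)‖ ^ 2 * V 0 := by
    simpa [hf] using he.tsum_mul_norm_inner_map_sq_le hV0 hVmono (A : 𝓗 →L[ℂ] 𝓗) (n := 0) (f := f)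
      (by simp)
  set L₀ := (span ℂ ((Finset.range (n + 1)).image e : Set 𝓗)).map (A.toLinearEquiv : 𝓗 →ₗ[ℂ] 𝓗)
  have hL₀ : finrank ℂ L₀ = n + 1 := by
    rw [LinearEquiv.finrank_map_eq, finrank_eq_card_basis (OrthonormalBasis.span he _).toBasis]
    simp
  rw [show lam n = courantFischer ℂ q n from hlam n]
  constructor
  · refine le_courantFischer hq0 hqC hL₀ fun f hf hf1 => ?_
    simpa [hf1] using he.le_tsum_mul_norm_inner_map_sq hV0 hVmono A hf
  · refine courantFischer_le hq0 ⟨L₀, hL₀⟩ fun L hL => ?_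
    obtain ⟨f, hfL, hf1, hf⟩ :=
      L.exists_norm_eq_one_forall_inner_eq_zero (by omega) fun k : Fin n => A (e k)
    refine ⟨f, hfL, hf1, ?_⟩
    simpa [hf1] using he.tsum_mul_norm_inner_map_sq_le hV0 hVmono (A : 𝓗 →L[ℂ] 𝓗) (n := n)
      (f := f) fun k hk => hf ⟨k, hk⟩
end

section
/- Let Z(θ₁,θ₂) = 1 − (cos θ₁ + cos θ₂)/2. For every x ∈ ℤ² there exists a constant C > 0 such that |e^{iθ₂} − 1| · |e^{−i x·θ} − 1| ≤ C · Z(θ) for all θ ∈ [−π,π]² ∖ {0}; that is, the function K(θ) = (e^{iθ₂} − 1)(e^{−i x·θ} − 1)/Z(θ) is bounded on (−π,π)² ∖ {0}. -/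
open MeasureTheory

/-- The Fourier symbol `Z(θ) = 1 − (cos θ₁ + cos θ₂)/2` of the discrete
Laplacian on `ℤ²` (normalized by the vertex degree). -/
noncomputable def Zsym (θ : ℝ × ℝ) : ℝ := 1 - (Real.cos θ.1 + Real.cos θ.2) / 2

/-- The pairing `x·θ = x₁θ₁ + x₂θ₂` between `ℤ²` and `ℝ²`. -/
noncomputable def latticeDot (x : ℤ × ℤ) (θ : ℝ × ℝ) : ℝ :=
  (x.1 : ℝ) * θ.1 + (x.2 : ℝ) * θ.2

/-- The potential kernel `a(x) = (2π)⁻² ∫_{(−π,π)²} (1 − cos(x·θ))/Z(θ) dθ`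
of the simple random walk on `ℤ²`. -/
noncomputable def potentialKernel (x : ℤ × ℤ) : ℝ :=
  ((2 * Real.pi) ^ 2)⁻¹ *
    ∫ θ in Set.Ioo (-Real.pi) Real.pi ×ˢ Set.Ioo (-Real.pi) Real.pi,
      (1 - Real.cos (latticeDot x θ)) / Zsym θ

/-- The Green-type function `H_x(y) = a(x) + a(y) − a(x−y)` on `ℤ²`. -/
noncomputable def greenFn (x y : ℤ × ℤ) : ℝ :=
  potentialKernel x + potentialKernel y - potentialKernel (x - y)

/-- The Euclidean norm of a lattice point of `ℤ²`. -/
noncomputable def latticeNorm (x : ℤ × ℤ) : ℝ :=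
  Real.sqrt ((x.1 : ℝ) ^ 2 + (x.2 : ℝ) ^ 2)

/-!
Both factors are Lipschitz in the phase, `‖e^{it} − 1‖ ≤ |t|`, so the product is at most
`|θ₂| · |x·θ| ≤ (|x₁| + |x₂|) |θ|²`. On the other side, Jordan's inequality
`cos t ≤ 1 − 2t²/π²` on `[−π, π]` gives `|θ|² ≤ π² Z(θ)` on the closed square, which
turns the quadratic upper bound into a multiple of `Z`.
-/

open Real

lemma sq_le_pi_sq_div_two_mul_one_sub_cos {t : ℝ} (ht : |t| ≤ π) :
    t ^ 2 ≤ π ^ 2 / 2 * (1 - cos t) := by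
  have hcos := cos_le_one_sub_mul_cos_sq ht
  calc t ^ 2 = π ^ 2 / 2 * (2 / π ^ 2 * t ^ 2) := by field_simp
    _ ≤ π ^ 2 / 2 * (1 - cos t) := by gcongr; linarith

lemma sum_sq_le_pi_sq_mul_Zsym {θ : ℝ × ℝ} (h₁ : |θ.1| ≤ π) (h₂ : |θ.2| ≤ π) :
    θ.1 ^ 2 + θ.2 ^ 2 ≤ π ^ 2 * Zsym θ := by
  have := sq_le_pi_sq_div_two_mul_one_sub_cos h₁
  have := sq_le_pi_sq_div_two_mul_one_sub_cos h₂
  rw [Zsym]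
  linarith

lemma abs_mul_abs_latticeDot_le (x : ℤ × ℤ) (θ : ℝ × ℝ) :
    |θ.2| * |latticeDot x θ| ≤ (|(x.1 : ℝ)| + |(x.2 : ℝ)|) * (θ.1 ^ 2 + θ.2 ^ 2) := by
  have hdot : |latticeDot x θ| ≤ |(x.1 : ℝ)| * |θ.1| + |(x.2 : ℝ)| * |θ.2| := by
    rw [latticeDot, ← abs_mul, ← abs_mul]
    exact abs_add_le _ _
  have hcross : |θ.2| * |θ.1| ≤ θ.1 ^ 2 + θ.2 ^ 2 := by
    nlinarith [sq_abs θ.1, sq_abs θ.2, sq_nonneg (|θ.1| - |θ.2|)]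
  calc |θ.2| * |latticeDot x θ|
      ≤ |θ.2| * (|(x.1 : ℝ)| * |θ.1| + |(x.2 : ℝ)| * |θ.2|) := by gcongr
    _ = |(x.1 : ℝ)| * (|θ.2| * |θ.1|) + |(x.2 : ℝ)| * θ.2 ^ 2 := by rw [← sq_abs θ.2]; ring
    _ ≤ |(x.1 : ℝ)| * (θ.1 ^ 2 + θ.2 ^ 2) + |(x.2 : ℝ)| * (θ.1 ^ 2 + θ.2 ^ 2) := by
        gcongr; nlinarith [sq_nonneg θ.1]
    _ = (|(x.1 : ℝ)| + |(x.2 : ℝ)|) * (θ.1 ^ 2 + θ.2 ^ 2) := by ring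

lemma norm_exp_neg_I_mul_ofReal_sub_one_le (s : ℝ) :
    ‖Complex.exp (-Complex.I * (s : ℂ)) - 1‖ ≤ |s| := by
  have h := norm_exp_I_mul_ofReal_sub_one_le (x := -s)
  rwa [Complex.ofReal_neg, mul_neg, ← neg_mul, norm_neg, norm_eq_abs] at h

/-- Key boundedness claim in the proof of Proposition 3.2: for every `x ∈ ℤ²`
there is `C > 0` with `|e^{iθ₂} − 1|·|e^{−ix·θ} − 1| ≤ C·Z(θ)` on
`[−π,π]² ∖ {0}`, i.e. `K(θ) = (e^{iθ₂}−1)(e^{−ix·θ}−1)/Z(θ)` is bounded. -/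
theorem stmt11 (x : ℤ × ℤ) :
    ∃ C : ℝ, 0 < C ∧
      ∀ θ ∈ (Set.Icc (-Real.pi) Real.pi ×ˢ Set.Icc (-Real.pi) Real.pi) \ {0},
        ‖Complex.exp (Complex.I * (θ.2 : ℂ)) - 1‖ *
            ‖Complex.exp (-Complex.I * (latticeDot x θ : ℂ)) - 1‖ ≤
          C * Zsym θ := by
  set M := |(x.1 : ℝ)| + |(x.2 : ℝ)|
  refine ⟨(M + 1) * π ^ 2, by positivity, ?_⟩
  rintro θ ⟨⟨h₁, h₂⟩, -⟩
  have hZ := sum_sq_le_pi_sq_mul_Zsym (abs_le.mpr h₁) (abs_le.mpr h₂)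
  have hZ_nonneg : 0 ≤ π ^ 2 * Zsym θ := (by positivity : (0 : ℝ) ≤ θ.1 ^ 2 + θ.2 ^ 2).trans hZ
  calc ‖Complex.exp (Complex.I * (θ.2 : ℂ)) - 1‖ *
        ‖Complex.exp (-Complex.I * (latticeDot x θ : ℂ)) - 1‖
      ≤ |θ.2| * |latticeDot x θ| := by
        gcongr
        · simpa using norm_exp_I_mul_ofReal_sub_one_le (x := θ.2)
        · exact norm_exp_neg_I_mul_ofReal_sub_one_le _
    _ ≤ M * (θ.1 ^ 2 + θ.2 ^ 2) := abs_mul_abs_latticeDot_le x θ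
    _ ≤ M * (π ^ 2 * Zsym θ) := by gcongr
    _ ≤ (M + 1) * (π ^ 2 * Zsym θ) := by gcongr; linarith
    _ = (M + 1) * π ^ 2 * Zsym θ := by ring
end

section
/- Let Z(θ₁,θ₂) = 1 − (cos θ₁ + cos θ₂)/2, let a(x) = (2π)⁻² ∫_{(−π,π)²} (1 − cos(x·θ))/Z(θ) dθ for x ∈ ℤ², and define H_x(y) = a(x) + a(y) − a(x−y). Then for every x ∈ ℤ², Σ_{y∈ℤ²} ( (H_x(y+e₁) − H_x(y))² + (H_x(y+e₂) − H_x(y))² ) < ∞; that is, the Dirichlet energy of H_x on ℤ² is finite. -/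
open MeasureTheory

/-!
In Fourier terms, `H_x(y + e) - H_x(y) = (2π)⁻² Re ∫ e^{i y·θ} g(θ) dθ` with
`g(θ) = (e^{i e·θ} - 1)(e^{-i x·θ} - 1) / Z(θ)`. Since `|e^{i z·θ} - 1|² = 4 sin² (z·θ/2)` and
`Z(θ) = sin² (θ₁/2) + sin² (θ₂/2)`, the numerator is at most `4 |e| |x| Z(θ)`, so `g` is bounded,
hence in `L²((-π, π)²)`. The differences are therefore (real parts of) Fourier coefficients of
an `L²` function, and Bessel's inequality for the orthonormal characters `(2π)⁻¹ e^{i k·θ}` makes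
their squares summable.
-/

open Complex Set
open scoped Real

lemma abs_sin_add_le (a b : ℝ) : |Real.sin (a + b)| ≤ |Real.sin a| + |Real.sin b| := by
  rw [Real.sin_add]
  calc |Real.sin a * Real.cos b + Real.cos a * Real.sin b|
      ≤ |Real.sin a| * |Real.cos b| + |Real.cos a| * |Real.sin b| := by
        rw [← abs_mul, ← abs_mul]; exact abs_add_le _ _
    _ ≤ |Real.sin a| * 1 + 1 * |Real.sin b| := by
        gcongr <;> exact Real.abs_cos_le_one _
    _ = |Real.sin a| + |Real.sin b| := by ring

lemma abs_sin_nat_mul_le (n : ℕ) (t : ℝ) : |Real.sin (n * t)| ≤ n * |Real.sin t| := by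
  induction n with
  | zero => simp
  | succ n ih =>
    calc |Real.sin ((n + 1 : ℕ) * t)| = |Real.sin (n * t + t)| := by push_cast; ring_nf
      _ ≤ |Real.sin (n * t)| + |Real.sin t| := abs_sin_add_le _ _
      _ ≤ (n + 1 : ℕ) * |Real.sin t| := by push_cast; linarith

lemma abs_sin_int_mul_le (n : ℤ) (t : ℝ) : |Real.sin (n * t)| ≤ |(n : ℝ)| * |Real.sin t| := by
  rcases Int.natAbs_eq n with hn | hn <;> rw [hn] <;> push_cast
  · simpa using abs_sin_nat_mul_le n.natAbs t
  · simpa [neg_mul, Real.sin_neg] using abs_sin_nat_mul_le n.natAbs t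

lemma Zsym_eq_sum_sin_sq (θ : ℝ × ℝ) :
    Zsym θ = Real.sin (θ.1 / 2) ^ 2 + Real.sin (θ.2 / 2) ^ 2 := by
  have h1 := Real.cos_two_mul_eq_one_sub (θ.1 / 2)
  have h2 := Real.cos_two_mul_eq_one_sub (θ.2 / 2)
  rw [mul_div_cancel₀ _ two_ne_zero] at h1 h2
  rw [Zsym, h1, h2]; ring

lemma Zsym_nonneg (θ : ℝ × ℝ) : 0 ≤ Zsym θ := by
  rw [Zsym_eq_sum_sin_sq]; positivity

lemma latticeNorm_sq (z : ℤ × ℤ) : latticeNorm z ^ 2 = (z.1 : ℝ) ^ 2 + (z.2 : ℝ) ^ 2 :=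
  Real.sq_sqrt (by positivity)

lemma latticeDot_add (a b : ℤ × ℤ) (θ : ℝ × ℝ) :
    latticeDot (a + b) θ = latticeDot a θ + latticeDot b θ := by
  simp only [latticeDot, Prod.fst_add, Prod.snd_add]; push_cast; ring

lemma latticeDot_neg (a : ℤ × ℤ) (θ : ℝ × ℝ) : latticeDot (-a) θ = -latticeDot a θ := by
  simp only [latticeDot, Prod.fst_neg, Prod.snd_neg]; push_cast; ring

lemma sin_half_latticeDot_sq_le (z : ℤ × ℤ) (θ : ℝ × ℝ) :
    Real.sin (latticeDot z θ / 2) ^ 2 ≤ latticeNorm z ^ 2 * Zsym θ := by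
  have hdot : latticeDot z θ / 2 = z.1 * (θ.1 / 2) + z.2 * (θ.2 / 2) := by
    rw [latticeDot]; ring
  rw [latticeNorm_sq, Zsym_eq_sum_sin_sq, ← sq_abs, ← sq_abs (z.1 : ℝ), ← sq_abs (z.2 : ℝ),
    ← sq_abs (Real.sin (θ.1 / 2)), ← sq_abs (Real.sin (θ.2 / 2))]
  set a := |(z.1 : ℝ)|
  set b := |(z.2 : ℝ)|
  set s := |Real.sin (θ.1 / 2)|
  set t := |Real.sin (θ.2 / 2)|
  have habs : |Real.sin (latticeDot z θ / 2)| ≤ a * s + b * t := by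
    rw [hdot]
    exact (abs_sin_add_le _ _).trans (add_le_add (abs_sin_int_mul_le _ _) (abs_sin_int_mul_le _ _))
  have hCauchySchwarz : (a * s + b * t) ^ 2 ≤ (a ^ 2 + b ^ 2) * (s ^ 2 + t ^ 2) := by
    nlinarith [sq_nonneg (a * t - b * s)]
  exact (pow_le_pow_left₀ (abs_nonneg _) habs 2).trans hCauchySchwarz

lemma one_sub_cos_latticeDot_le (z : ℤ × ℤ) (θ : ℝ × ℝ) :
    1 - Real.cos (latticeDot z θ) ≤ 2 * latticeNorm z ^ 2 * Zsym θ := by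
  have h := Real.cos_two_mul_eq_one_sub (latticeDot z θ / 2)
  rw [mul_div_cancel₀ _ two_ne_zero] at h
  rw [h]
  nlinarith [sin_half_latticeDot_sq_le z θ]

noncomputable def latticeChar (k : ℤ × ℤ) (θ : ℝ × ℝ) : ℂ := exp (I * latticeDot k θ)

lemma latticeChar_add (a b : ℤ × ℤ) (θ : ℝ × ℝ) :
    latticeChar (a + b) θ = latticeChar a θ * latticeChar b θ := by
  rw [latticeChar, latticeChar, latticeChar, ← exp_add, latticeDot_add]; push_cast; ring_nf

lemma conj_latticeChar (k : ℤ × ℤ) (θ : ℝ × ℝ) :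
    starRingEnd ℂ (latticeChar k θ) = latticeChar (-k) θ := by
  rw [latticeChar, latticeChar, ← exp_conj, latticeDot_neg, map_mul, conj_I, conj_ofReal]
  push_cast; ring_nf

lemma re_latticeChar (k : ℤ × ℤ) (θ : ℝ × ℝ) :
    (latticeChar k θ).re = Real.cos (latticeDot k θ) := by
  rw [latticeChar, mul_comm, exp_ofReal_mul_I_re]

lemma norm_latticeChar (k : ℤ × ℤ) (θ : ℝ × ℝ) : ‖latticeChar k θ‖ = 1 :=
  norm_exp_I_mul_ofReal _

@[fun_prop]
lemma measurable_latticeChar (k : ℤ × ℤ) : Measurable (latticeChar k) := by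
  unfold latticeChar latticeDot; fun_prop

lemma norm_latticeChar_sub_one_sq_le (z : ℤ × ℤ) (θ : ℝ × ℝ) :
    ‖latticeChar z θ - 1‖ ^ 2 ≤ 4 * latticeNorm z ^ 2 * Zsym θ := by
  rw [latticeChar, norm_exp_I_mul_ofReal_sub_one, norm_mul, mul_pow, Real.norm_two,
    Real.norm_eq_abs, sq_abs]
  nlinarith [sin_half_latticeDot_sq_le z θ]

lemma norm_latticeChar_sub_one_mul_le (a b : ℤ × ℤ) (θ : ℝ × ℝ) :
    ‖(latticeChar a θ - 1) * (latticeChar b θ - 1)‖ ≤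
      4 * latticeNorm a * latticeNorm b * Zsym θ := by
  have hZ := Zsym_nonneg θ
  have ha : 0 ≤ latticeNorm a := Real.sqrt_nonneg _
  have hb : 0 ≤ latticeNorm b := Real.sqrt_nonneg _
  rw [← pow_le_pow_iff_left₀ (norm_nonneg _) (by positivity) two_ne_zero, norm_mul, mul_pow]
  calc ‖latticeChar a θ - 1‖ ^ 2 * ‖latticeChar b θ - 1‖ ^ 2
      ≤ (4 * latticeNorm a ^ 2 * Zsym θ) * (4 * latticeNorm b ^ 2 * Zsym θ) :=
        mul_le_mul (norm_latticeChar_sub_one_sq_le a θ) (norm_latticeChar_sub_one_sq_le b θ)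
          (by positivity) (by positivity)
    _ = (4 * latticeNorm a * latticeNorm b * Zsym θ) ^ 2 := by ring

lemma inner_toLp_eq_integral {α 𝕜 : Type*} [MeasurableSpace α] {μ : Measure α} [RCLike 𝕜]
    {f g : α → 𝕜} (hf : MemLp f 2 μ) (hg : MemLp g 2 μ) :
    inner 𝕜 (hf.toLp f) (hg.toLp g) = ∫ a, starRingEnd 𝕜 (f a) * g a ∂μ := by
  rw [L2.inner_def]
  refine integral_congr_ae ?_
  filter_upwards [hf.coeFn_toLp, hg.coeFn_toLp] with a hfa hga
  rw [hfa, hga, RCLike.inner_apply, mul_comm]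

noncomputable def squareMeasure : Measure (ℝ × ℝ) :=
  volume.restrict (Ioo (-π) π ×ˢ Ioo (-π) π)

instance : IsFiniteMeasure squareMeasure :=
  isFiniteMeasure_restrict.mpr
    ((Metric.isBounded_Ioo _ _).prod (Metric.isBounded_Ioo _ _)).measure_lt_top.ne

lemma potentialKernel_eq_integral (z : ℤ × ℤ) :
    potentialKernel z =
      ((2 * π) ^ 2)⁻¹ * ∫ θ, (1 - Real.cos (latticeDot z θ)) / Zsym θ ∂squareMeasure :=
  rfl

lemma integrable_one_sub_cos_div_Zsym (z : ℤ × ℤ) :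
    Integrable (fun θ => (1 - Real.cos (latticeDot z θ)) / Zsym θ) squareMeasure := by
  have hmeas : Measurable fun θ => (1 - Real.cos (latticeDot z θ)) / Zsym θ := by
    unfold latticeDot Zsym; fun_prop
  refine Integrable.of_bound hmeas.aestronglyMeasurable (2 * latticeNorm z ^ 2)
    (ae_of_all _ fun θ => ?_)
  have hcos : 0 ≤ 1 - Real.cos (latticeDot z θ) := sub_nonneg.mpr (Real.cos_le_one _)
  rw [Real.norm_of_nonneg (div_nonneg hcos (Zsym_nonneg θ))]
  exact div_le_of_le_mul₀ (Zsym_nonneg θ) (by positivity) (one_sub_cos_latticeDot_le z θ)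

lemma integral_exp_I_mul_int_mul (n : ℤ) :
    ∫ t in Ioo (-π) π, exp (I * (n * t)) = if n = 0 then 2 * (π : ℂ) else 0 := by
  split_ifs with hn
  · simp [hn, max_eq_left (by positivity : (0 : ℝ) ≤ π + π)]
    ring
  · have hc : I * n ≠ 0 := mul_ne_zero I_ne_zero (Int.cast_ne_zero.mpr hn)
    have hperiod : exp (I * n * π) = exp (I * n * ↑(-π)) * exp (n * (2 * π * I)) := by
      rw [← exp_add]; push_cast; ring_nf
    simp_rw [← integral_Ioc_eq_integral_Ioo, ← intervalIntegral.integral_of_le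
      (neg_le_self Real.pi_pos.le), ← mul_assoc]
    rw [integral_exp_mul_complex hc, hperiod, exp_int_mul_two_pi_mul_I, mul_one, sub_self,
      zero_div]

lemma integral_latticeChar (k : ℤ × ℤ) :
    ∫ θ, latticeChar k θ ∂squareMeasure = if k = 0 then (2 * (π : ℂ)) ^ 2 else 0 := by
  have hsplit : latticeChar k = fun θ => exp (I * (k.1 * θ.1)) * exp (I * (k.2 * θ.2)) := by
    ext θ; rw [latticeChar, latticeDot, ← exp_add]; push_cast; ring_nf
  rw [hsplit, squareMeasure, Measure.volume_eq_prod,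
    setIntegral_prod_mul (fun t : ℝ => exp (I * (k.1 * t))) (fun t : ℝ => exp (I * (k.2 * t))),
    integral_exp_I_mul_int_mul, integral_exp_I_mul_int_mul]
  rcases k with ⟨k₁, k₂⟩
  simp only [Prod.mk_eq_zero]
  split_ifs <;> simp_all [sq]

lemma memLp_latticeChar (k : ℤ × ℤ) : MemLp (latticeChar k) 2 squareMeasure :=
  MemLp.of_bound (measurable_latticeChar k).aestronglyMeasurable 1
    (ae_of_all _ fun θ => (norm_latticeChar k θ).le)

noncomputable def fourierBasisL2 (k : ℤ × ℤ) : Lp ℂ 2 squareMeasure :=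
  ((memLp_latticeChar k).const_mul ((2 * π : ℂ)⁻¹)).toLp _

lemma inner_fourierBasisL2_toLp {g : ℝ × ℝ → ℂ} (hg : MemLp g 2 squareMeasure) (k : ℤ × ℤ) :
    inner ℂ (fourierBasisL2 k) (hg.toLp g) =
      (2 * π : ℂ)⁻¹ * ∫ θ, latticeChar (-k) θ * g θ ∂squareMeasure := by
  rw [fourierBasisL2, inner_toLp_eq_integral, ← integral_const_mul]
  congr 1 with θ
  rw [map_mul, conj_latticeChar, map_inv₀, map_mul, map_ofNat, conj_ofReal]
  ring

lemma orthonormal_fourierBasisL2 : Orthonormal ℂ fourierBasisL2 := by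
  rw [orthonormal_iff_ite]
  intro j k
  have hπ : (2 * π : ℂ) ≠ 0 := by exact_mod_cast Real.two_pi_pos.ne'
  refine (inner_fourierBasisL2_toLp _ j).trans ?_
  simp_rw [mul_left_comm _ ((2 * π : ℂ)⁻¹), ← latticeChar_add]
  rw [integral_const_mul, integral_latticeChar]
  simp only [neg_add_eq_zero, eq_comm (a := j)]
  split_ifs
  · field_simp
  · simp

/-- The function `g` of the proof idea, for a general step `e`. -/
noncomputable def greenGradSymbol (x e : ℤ × ℤ) (θ : ℝ × ℝ) : ℂ :=
  (latticeChar e θ - 1) * (latticeChar (-x) θ - 1) / Zsym θ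

lemma norm_greenGradSymbol_le (x e : ℤ × ℤ) (θ : ℝ × ℝ) :
    ‖greenGradSymbol x e θ‖ ≤ 4 * latticeNorm e * latticeNorm (-x) := by
  rw [greenGradSymbol, norm_div, norm_real, Real.norm_of_nonneg (Zsym_nonneg θ)]
  exact div_le_of_le_mul₀ (Zsym_nonneg θ) (by unfold latticeNorm; positivity)
    (norm_latticeChar_sub_one_mul_le e (-x) θ)

lemma memLp_greenGradSymbol (x e : ℤ × ℤ) : MemLp (greenGradSymbol x e) 2 squareMeasure :=
  MemLp.of_bound (Measurable.aestronglyMeasurable (by unfold greenGradSymbol Zsym; fun_prop)) _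
    (ae_of_all _ (norm_greenGradSymbol_le x e))

lemma re_latticeChar_mul_greenGradSymbol (x e y : ℤ × ℤ) (θ : ℝ × ℝ) :
    (latticeChar y θ * greenGradSymbol x e θ).re =
      (1 - Real.cos (latticeDot (y + e) θ)) / Zsym θ - (1 - Real.cos (latticeDot y θ)) / Zsym θ
        - ((1 - Real.cos (latticeDot (x - (y + e)) θ)) / Zsym θ
          - (1 - Real.cos (latticeDot (x - y) θ)) / Zsym θ) := by
  have hexpand : latticeChar y θ * greenGradSymbol x e θ =
      (latticeChar (y + e + -x) θ - latticeChar (y + e) θ - latticeChar (y + -x) θ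
        + latticeChar y θ) / (Zsym θ : ℂ) := by
    simp only [greenGradSymbol, latticeChar_add]; ring
  have hcos (a b : ℤ × ℤ) :
      Real.cos (latticeDot (a + -b) θ) = Real.cos (latticeDot (b - a) θ) := by
    rw [← neg_sub, latticeDot_neg, Real.cos_neg, sub_eq_add_neg]
  rw [hexpand, div_ofReal_re]
  simp only [sub_re, add_re, re_latticeChar, hcos]
  ring

lemma greenFn_add_sub_greenFn (x e y : ℤ × ℤ) :
    greenFn x (y + e) - greenFn x y =
      ((2 * π) ^ 2)⁻¹ * (∫ θ, latticeChar y θ * greenGradSymbol x e θ ∂squareMeasure).re := by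
  have hf := integrable_one_sub_cos_div_Zsym
  have hprod : Integrable (fun θ => latticeChar y θ * greenGradSymbol x e θ) squareMeasure :=
    (memLp_latticeChar y).integrable_mul (memLp_greenGradSymbol x e)
  have hre := integral_re hprod
  simp only [RCLike.re_to_complex, re_latticeChar_mul_greenGradSymbol] at hre
  have hsub (z w : ℤ × ℤ) : Integrable (fun θ => (1 - Real.cos (latticeDot z θ)) / Zsym θ
      - (1 - Real.cos (latticeDot w θ)) / Zsym θ) squareMeasure := (hf z).sub (hf w)
  rw [← hre, integral_sub (hsub _ _) (hsub _ _), integral_sub (hf _) (hf _),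
    integral_sub (hf _) (hf _)]
  simp only [greenFn, potentialKernel_eq_integral]
  ring

theorem summable_sq_greenFn_add_sub (x e : ℤ × ℤ) :
    Summable fun y => (greenFn x (y + e) - greenFn x y) ^ 2 := by
  set G := (memLp_greenGradSymbol x e).toLp _
  have hBessel : Summable fun y => ‖inner ℂ (fourierBasisL2 (-y)) G‖ ^ 2 :=
    (Equiv.neg (ℤ × ℤ)).summable_iff.mpr (orthonormal_fourierBasisL2.inner_products_summable G)
  have hcoeff (y : ℤ × ℤ) :
      greenFn x (y + e) - greenFn x y = (2 * π)⁻¹ * (inner ℂ (fourierBasisL2 (-y)) G).re := by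
    rw [greenFn_add_sub_greenFn, inner_fourierBasisL2_toLp, neg_neg,
      show (2 * π : ℂ)⁻¹ = ((2 * π)⁻¹ : ℝ) by push_cast; rfl, re_ofReal_mul]
    ring
  refine (hBessel.mul_left ((2 * π)⁻¹ ^ 2)).of_nonneg_of_le (fun y => sq_nonneg _) fun y => ?_
  rw [hcoeff, mul_pow, ← sq_abs (Complex.re _)]
  gcongr
  exact abs_re_le_norm _

/-- Proposition 3.2, main quantitative part: the coordinate differences of the
Green-type function `H_x` are square-summable over `ℤ²`, i.e. `H_x` has finite
Dirichlet energy. -/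
theorem stmt12 (x : ℤ × ℤ) :
    Summable (fun y : ℤ × ℤ =>
      (greenFn x (y + (1, 0)) - greenFn x y) ^ 2 +
        (greenFn x (y + (0, 1)) - greenFn x y) ^ 2) :=
  (summable_sq_greenFn_add_sub x (1, 0)).add (summable_sq_greenFn_add_sub x (0, 1))
end
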